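/- arXiv:1610.00424 — 6 statements merged into one kernel-verified Lean document; each statement's English description precedes it below -/
import Mathlib

section
/- For every integer d with d ≡ 1 (mod 4) and d not a perfect square, there exist positive integers a and b such that (a−b)² − 2(a+b) + 1 = d. -/
/-- Writing `a - b = 2n` turns `(a - b)² - 2(a + b) + 1 = 4m + 1` into `a + b = 2(n² - m)`,
so `b = n² - n - m` and `a = n² + n - m`; both are positive once `n` is large. -/
theorem exists_pos_discriminant_eq_four_mul_add_one (m : ℤ) :
    ∃ a b : ℤ, 0 < a ∧ 0 < b ∧ (a - b) ^ 2 - 2 * (a + b) + 1 = 4 * m + 1 := by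
  set n := |m| + 2
  have hb : 0 < n ^ 2 - n - m := by nlinarith [abs_nonneg m, le_abs_self m]
  exact ⟨n ^ 2 + n - m, n ^ 2 - n - m, by linarith [abs_nonneg m], hb, by ring⟩

theorem discriminant_one_mod_four_general (d : ℤ) (hd : d % 4 = 1) :
    ∃ a b : ℤ, 0 < a ∧ 0 < b ∧ (a - b) ^ 2 - 2 * (a + b) + 1 = d := by
  obtain ⟨m, rfl⟩ : ∃ m, d = 4 * m + 1 := ⟨d / 4, by omega⟩
  exact exists_pos_discriminant_eq_four_mul_add_one m

/-- Every non-square integer `d ≡ 1 (mod 4)` is of the form `(a−b)² − 2(a+b) + 1`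
for some positive integers `a`, `b`. -/
theorem discriminant_one_mod_four (d : ℤ) (hd : d % 4 = 1) (hns : ¬ ∃ m : ℤ, m ^ 2 = d) :
    ∃ a b : ℤ, 0 < a ∧ 0 < b ∧ (a - b) ^ 2 - 2 * (a + b) + 1 = d :=
  discriminant_one_mod_four_general d hd
end

section
/- For every quadratic algebraic integer α over ℚ, there exists a natural number n and positive integers a, b such that α + n is a root of x² − (a+b+1)x + (ab+a+b). -/
/-!
Write the minimal polynomial of `α` as `X² + pX + q`. Substituting `X = Y - n` shows that
`α + n` is a root of `X² - (a+b+1)X + (ab+a+b)` as soon as `a + b + 1 = 2n - p` and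
`ab + a + b = n² - pn + q`. For every integer `k` these are solved by
`b = k² + kp + q`, `n = b + k + p + 1`, `a = n + k`, and `k = |p| + |q| + 2` makes `a`, `b`
positive and `n` nonnegative.
-/

open Polynomial

theorem Polynomial.Monic.aeval_of_natDegree_eq_two {R A : Type*} [CommRing R] [CommRing A]
    [Algebra R A] {f : R[X]} (hf : f.Monic) (hdeg : f.natDegree = 2) (x : A) :
    aeval x f = x ^ 2 + algebraMap R A (f.coeff 1) * x + algebraMap R A (f.coeff 0) := by
  have hlead : f.coeff 2 = 1 := hdeg ▸ hf.coeff_natDegree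
  rw [aeval_eq_sum_range, hdeg]
  simp only [Finset.sum_range_succ, Finset.sum_range_zero, hlead, Algebra.smul_def, map_one]
  ring

theorem add_root_of_sq_add_mul_add_eq_zero {R : Type*} [CommRing R] {x p q n a b : R}
    (hx : x ^ 2 + p * x + q = 0) (hsum : a + b + 1 = 2 * n - p)
    (hprod : a * b + a + b = n ^ 2 - p * n + q) :
    (x + n) ^ 2 - (a + b + 1) * (x + n) + (a * b + a + b) = 0 := by
  rw [hsum, hprod]
  linear_combination hx

theorem exists_pos_add_eq_and_mul_add_eq (p q : ℤ) :
    ∃ (n : ℕ) (a b : ℤ), 0 < a ∧ 0 < b ∧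
      a + b + 1 = 2 * n - p ∧ a * b + a + b = n ^ 2 - p * n + q := by
  set k := |p| + |q| + 2 with hk
  have hp := neg_abs_le p
  have hp₀ := abs_nonneg p
  have hq := abs_nonneg q
  have hb : 0 < k ^ 2 + k * p + q := by
    nlinarith [neg_abs_le q]
  obtain ⟨n, hn⟩ : ∃ n : ℕ, (n : ℤ) = k ^ 2 + k * p + q + k + p + 1 :=
    ⟨(k ^ 2 + k * p + q + k + p + 1).toNat, by omega⟩
  refine ⟨n, n + k, k ^ 2 + k * p + q, by omega, hb, ?_, ?_⟩ <;>
    · rw [hn]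
      ring

/-- For every quadratic algebraic integer `α`, there are a natural number `n` and
positive integers `a`, `b` such that `α + n` is a root of `x² − (a+b+1)x + (ab+a+b)`. -/
theorem alpha_plus_n_quadratic (α : ℂ)
    (hα : ∃ p : Polynomial ℤ, p.Monic ∧ p.natDegree = 2 ∧ Irreducible p ∧
      Polynomial.aeval α p = 0) :
    ∃ (n : ℕ) (a b : ℤ), 0 < a ∧ 0 < b ∧
      (α + n) ^ 2 - ((a : ℂ) + b + 1) * (α + n) + ((a : ℂ) * b + a + b) = 0 := by
  obtain ⟨f, hmon, hdeg, -, hroot⟩ := hα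
  have hquad : α ^ 2 + (f.coeff 1 : ℂ) * α + f.coeff 0 = 0 := by
    simpa [hmon.aeval_of_natDegree_eq_two hdeg] using hroot
  obtain ⟨n, a, b, ha, hb, hsum, hprod⟩ := exists_pos_add_eq_and_mul_add_eq (f.coeff 1) (f.coeff 0)
  exact ⟨n, a, b, ha, hb, add_root_of_sq_add_mul_add_eq_zero hquad
    (by exact_mod_cast hsum) (by exact_mod_cast hprod)⟩
end

section
/- If α is a chromatic root, then α + n is a chromatic root for every natural number n. -/
open Polynomial

/-- `α` is a chromatic root: it is a root of the chromatic polynomial of some finite graph. -/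
def IsChromaticRoot (α : ℂ) : Prop :=
  ∃ (m : ℕ) (G : SimpleGraph (Fin m)) (P : Polynomial ℂ),
    (∀ q : ℕ, P.eval (q : ℂ) = Nat.card (G.Coloring (Fin q))) ∧ P.eval α = 0

open SimpleGraph in
/-- The cone over a graph: add one new vertex (`none`) adjacent to all old vertices. -/
private def cone {V : Type*} (G : SimpleGraph V) : SimpleGraph (Option V) where
  Adj x y := x ≠ y ∧ ∀ a b, x = some a → y = some b → G.Adj a b
  symm := ⟨fun x y => by
    rintro ⟨hne, h⟩
    exact ⟨hne.symm, fun a b ha hb => (h b a hb ha).symm⟩⟩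
  loopless := ⟨fun x => by rintro ⟨hne, -⟩; exact hne rfl⟩

private lemma cone_adj_some_some {V : Type*} (G : SimpleGraph V) {a b : V} (h : G.Adj a b) :
    (cone G).Adj (some a) (some b) := by
  refine ⟨by simpa using h.ne, ?_⟩
  rintro a' b' ⟨rfl⟩ ⟨rfl⟩
  exact h

private lemma cone_adj_some_none {V : Type*} (G : SimpleGraph V) (a : V) :
    (cone G).Adj (some a) none :=
  ⟨by simp, by rintro a' b' - ⟨⟩⟩

open SimpleGraph in
/-- Colorings of the cone correspond to a choice of color for the apex together with a coloring
of the base with one fewer color. -/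
private def coneColoringEquiv {V : Type*} (G : SimpleGraph V) (q : ℕ) :
    (cone G).Coloring (Fin (q + 1)) ≃ Fin (q + 1) × G.Coloring (Fin q) where
  toFun C :=
    ⟨C none, Coloring.mk
      (fun v => (finSuccAboveEquiv (C none)).symm
        ⟨C (some v), C.valid (cone_adj_some_none G v)⟩)
      (fun {a b} h hc => by
        have hne : C (some a) ≠ C (some b) := C.valid (cone_adj_some_some G h)
        exact hne (congrArg Subtype.val
          ((finSuccAboveEquiv (C none)).symm.injective hc)))⟩
  invFun p :=
    Coloring.mk
      (fun x => Option.rec p.1 (fun v => (finSuccAboveEquiv p.1 (p.2 v)).1) x)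
      (by
        rintro (_ | a) (_ | b) ⟨hne, h⟩
        · exact absurd rfl hne
        · intro hc
          exact (finSuccAboveEquiv p.1 (p.2 b)).2 hc.symm
        · intro hc
          exact (finSuccAboveEquiv p.1 (p.2 a)).2 hc
        · intro hc
          have hadj : G.Adj a b := h a b rfl rfl
          exact p.2.valid hadj
            ((finSuccAboveEquiv p.1).injective (Subtype.ext hc)))
  left_inv C := by
    ext x
    cases x with
    | none => rfl
    | some v =>
      exact congrArg Fin.val (congrArg Subtype.val ((finSuccAboveEquiv (C none)).apply_symm_apply _))
  right_inv p := by
    refine Prod.ext rfl ?_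
    ext v
    exact congrArg Fin.val (((finSuccAboveEquiv p.1).symm_apply_eq).mpr (Subtype.ext rfl))

open SimpleGraph in
/-- Transporting colorings along a graph isomorphism. -/
private def coloringEquivOfIso {V W α : Type*} {A : SimpleGraph V} {B : SimpleGraph W}
    (e : A ≃g B) : A.Coloring α ≃ B.Coloring α where
  toFun C := C.comp e.symm.toHom
  invFun C := C.comp e.toHom
  left_inv C := by ext v; simp [Hom.comp]
  right_inv C := by ext v; simp [Hom.comp]

open SimpleGraph in
private lemma step {β : ℂ} (h : IsChromaticRoot β) : IsChromaticRoot (β + 1) := by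
  obtain ⟨m, G, P, hP, hroot⟩ := h
  refine ⟨m + 1, SimpleGraph.comap (finSuccEquiv m).toEmbedding (cone G), X * P.comp (X - 1), ?_, ?_⟩
  · intro q
    have hiso := coloringEquivOfIso (α := Fin q) (Iso.comap (finSuccEquiv m) (cone G))
    cases q with
    | zero =>
      have : IsEmpty ((cone G).Coloring (Fin 0)) :=
        ⟨fun C => (C none).elim0⟩
      have : IsEmpty ((SimpleGraph.comap (finSuccEquiv m).toEmbedding (cone G)).Coloring (Fin 0)) :=
        Function.isEmpty hiso
      rw [Nat.card_of_isEmpty]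
      simp
    | succ k =>
      have hcard : Nat.card ((SimpleGraph.comap (finSuccEquiv m).toEmbedding (cone G)).Coloring (Fin (k+1)))
          = (k + 1) * Nat.card (G.Coloring (Fin k)) := by
        rw [show Nat.card ((SimpleGraph.comap (finSuccEquiv m).toEmbedding (cone G)).Coloring (Fin (k+1))) = Nat.card ((cone G).Coloring (Fin (k+1))) from Nat.card_congr hiso, Nat.card_congr (coneColoringEquiv G k), Nat.card_prod,
          Nat.card_eq_fintype_card, Fintype.card_fin]
      rw [hcard, eval_mul, eval_X, eval_comp, eval_sub, eval_X, eval_one]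
      push_cast
      rw [show ((k : ℂ) + 1 - 1) = (k : ℂ) by ring, hP k]
  · rw [eval_mul, eval_comp, eval_sub, eval_X, eval_one,
      show (β + 1 - 1) = β by ring, hroot, mul_zero]

/-- If `α` is a chromatic root, then so is `α + n` for every natural number `n`. -/
theorem isChromaticRoot_add_nat (α : ℂ) (hα : IsChromaticRoot α) (n : ℕ) :
    IsChromaticRoot (α + n) := by
  induction n with
  | zero => simpa using hα
  | succ k ih =>
    have := step ih
    rwa [show α + k + 1 = α + (k + 1 : ℕ) by push_cast; ring] at this
end

section
/- Let s ≥ 2 and let ω be a (2s−1)-th root of unity with ω ≠ 1. If p ≡ 2 (mod 2(2s−1)), then (ω^s − ω)^p = ω(ω^s − 1)^p. -/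
theorem pow_two_mul_eq_of_sq_eq {M : Type*} [CommMonoid M] {a b c : M} (h : a ^ 2 = c * b ^ 2)
    (n : ℕ) : a ^ (2 * n) = c ^ n * b ^ (2 * n) := by
  rw [pow_mul, pow_mul, h, mul_pow]

theorem sq_pow_eq_of_pow_two_mul_sub_one_eq_one {M : Type*} [Monoid M] {ω : M} {s : ℕ}
    (hs : 1 ≤ s) (hω : ω ^ (2 * s - 1) = 1) : (ω ^ s) ^ 2 = ω := by
  rw [← pow_mul, show s * 2 = (2 * s - 1) + 1 by omega, pow_succ, hω, one_mul]

theorem sub_sq_eq_mul_sub_one_sq {R : Type*} [CommRing R] {x ω : R} (h : x ^ 2 = ω) :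
    (x - ω) ^ 2 = ω * (x - 1) ^ 2 := by
  linear_combination (1 - ω) * h

theorem theta_root_sufficiency_general (s : ℕ) (hs : 2 ≤ s) (ω : ℂ)
    (hω : ω ^ (2 * s - 1) = 1) (p : ℕ)
    (hp : p % (2 * (2 * s - 1)) = 2) :
    (ω ^ s - ω) ^ p = ω * (ω ^ s - 1) ^ p := by
  have hsq : (ω ^ s - ω) ^ 2 = ω * (ω ^ s - 1) ^ 2 :=
    sub_sq_eq_mul_sub_one_sq (sq_pow_eq_of_pow_two_mul_sub_one_eq_one (by omega) hω)
  obtain ⟨k, rfl⟩ : ∃ k, p = 2 * ((2 * s - 1) * k + 1) := by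
    refine ⟨p / (2 * (2 * s - 1)), ?_⟩
    have := Nat.div_add_mod p (2 * (2 * s - 1))
    rw [hp] at this
    linarith
  rw [pow_two_mul_eq_of_sq_eq hsq, pow_succ, pow_mul, hω, one_pow, one_mul]

/-- Let `s ≥ 2` and `ω` a `(2s−1)`-th root of unity with `ω ≠ 1`. If
`p ≡ 2 (mod 2(2s−1))` then `(ω^s − ω)^p = ω(ω^s − 1)^p`. -/
theorem theta_root_sufficiency (s : ℕ) (hs : 2 ≤ s) (ω : ℂ)
    (hω : ω ^ (2 * s - 1) = 1) (hω1 : ω ≠ 1) (p : ℕ)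
    (hp : p % (2 * (2 * s - 1)) = 2) :
    (ω ^ s - ω) ^ p = ω * (ω ^ s - 1) ^ p :=
  theta_root_sufficiency_general s hs ω hω p hp
end

section
/- Let s ≥ 2 and let ω be a primitive (2s−1)-th root of unity in ℂ. If (ω^s − ω)^p = ω(ω^s − 1)^p for a positive integer p, then p ≡ 2 (mod 2(2s−1)). -/
/-! Since `ω ^ (2s-1) = 1`, the element `ζ = -ω ^ s` satisfies `ζ ^ 2 = ω`, hence
`ω ^ s - ω = ζ (ω ^ s - 1)`. As `ω ^ s ≠ 1`, the hypothesis cancels to `ζ ^ p = ζ ^ 2`. Because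
`s` is coprime to the odd number `2s-1`, `ω ^ s` is again a primitive `(2s-1)`-th root of unity
and `ζ` is a primitive `2(2s-1)`-th one, so `p ≡ 2 (mod 2(2s-1))`. -/

theorem IsPrimitiveRoot.neg_of_odd {R : Type*} [CommRing R] [Nontrivial R] (hR : ringChar R ≠ 2)
    {ζ : R} {n : ℕ} (h : IsPrimitiveRoot ζ n) (hn : Odd n) : IsPrimitiveRoot (-ζ) (2 * n) := by
  have hcop : (orderOf (-1 : R)).Coprime (orderOf ζ) := by
    rw [orderOf_neg_one, if_neg hR, ← h.eq_orderOf]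
    exact Nat.coprime_two_left.mpr hn
  rw [IsPrimitiveRoot.iff_orderOf, neg_eq_neg_one_mul,
    (Commute.all _ _).orderOf_mul_eq_mul_orderOf_of_coprime hcop, orderOf_neg_one, if_neg hR,
    ← h.eq_orderOf]

theorem Nat.coprime_two_mul_sub_one {s : ℕ} (hs : 1 ≤ s) : s.Coprime (2 * s - 1) := by
  rw [show 2 * s - 1 = s + (s - 1) by omega, Nat.coprime_self_add_right,
    Nat.coprime_self_sub_right hs]
  exact Nat.coprime_one_right s

theorem neg_pow_sq_eq_self_of_pow_two_mul_sub_one_eq_one {M : Type*} [Monoid M] [HasDistribNeg M]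
    {ω : M} {s : ℕ} (hs : 1 ≤ s) (h : ω ^ (2 * s - 1) = 1) : (-ω ^ s) ^ 2 = ω := by
  rw [neg_sq, ← pow_mul, show s * 2 = 2 * s - 1 + 1 by omega, pow_succ, h, one_mul]

theorem theta_root_necessity_general (s : ℕ) (hs : 2 ≤ s) (ω : ℂ)
    (hω : IsPrimitiveRoot ω (2 * s - 1)) (p : ℕ)
    (h : (ω ^ s - ω) ^ p = ω * (ω ^ s - 1) ^ p) :
    p % (2 * (2 * s - 1)) = 2 := by
  have hζ : IsPrimitiveRoot (-ω ^ s) (2 * (2 * s - 1)) :=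
    (hω.pow_of_coprime s (Nat.coprime_two_mul_sub_one (by omega))).neg_of_odd (by simp)
      ⟨s - 1, by omega⟩
  have hsq : (-ω ^ s) ^ 2 = ω :=
    neg_pow_sq_eq_self_of_pow_two_mul_sub_one_eq_one (by omega) hω.pow_eq_one
  have hne : ω ^ s - 1 ≠ 0 := sub_ne_zero.mpr (hω.pow_ne_one_of_pos_of_lt (by omega) (by omega))
  have hpow : (-ω ^ s) ^ p = (-ω ^ s) ^ 2 := by
    refine mul_right_cancel₀ (pow_ne_zero p hne) ?_
    rw [← mul_pow, hsq, ← h]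
    congr 1
    linear_combination -hsq
  rw [(hζ.isOfFinOrder (by omega)).pow_inj_mod, ← hζ.eq_orderOf] at hpow
  rw [hpow, Nat.mod_eq_of_lt (by omega)]

/-- Let `s ≥ 2` and let `ω` be a primitive `(2s−1)`-th root of unity in `ℂ`. If
`(ω^s − ω)^p = ω(ω^s − 1)^p` for a positive integer `p`, then `p ≡ 2 (mod 2(2s−1))`. -/
theorem theta_root_necessity (s : ℕ) (hs : 2 ≤ s) (ω : ℂ)
    (hω : IsPrimitiveRoot ω (2 * s - 1)) (p : ℕ) (hp : 0 < p)
    (h : (ω ^ s - ω) ^ p = ω * (ω ^ s - 1) ^ p) :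
    p % (2 * (2 * s - 1)) = 2 :=
  theta_root_necessity_general s hs ω hω p h
end

section
/- Fix integers n, s ≥ 2. Let g(x) = x^{ns} − x^{ns−1} + x^{n−1} − 1 and f(x) = (x^s − 1)^n − x^{n−1}(x^{s−1} − 1)^n. If α ∈ ℂ satisfies g(α) = 0, then f(α^n) = 0. -/
/-!
With `x = α ^ n`, the polynomial `g` factors through `f`'s building blocks:
`g(α) = (x ^ s - 1) - α ^ (n - 1) (x ^ (s - 1) - 1)`. So a root `α` of `g` gives
`x ^ s - 1 = α ^ (n - 1) (x ^ (s - 1) - 1)`, and raising this to the `n`-th power turns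
`(α ^ (n - 1)) ^ n` into `x ^ (n - 1)`, which is `f(x) = 0`.
-/

theorem pow_pred_mul_pow_pow_pred {M : Type*} [Monoid M] (a : M) {n s : ℕ}
    (hn : 1 ≤ n) (hs : 1 ≤ s) : a ^ (n - 1) * (a ^ n) ^ (s - 1) = a ^ (n * s - 1) := by
  rw [← pow_mul, ← pow_add]
  congr 1
  obtain ⟨t, rfl⟩ := Nat.exists_eq_add_of_le hs
  rw [Nat.add_sub_cancel_left, Nat.mul_add, Nat.mul_one]
  omega

theorem pow_pow_sub_one_sub_mul_eq {R : Type*} [CommRing R] (a : R) {n s : ℕ}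
    (hn : 1 ≤ n) (hs : 1 ≤ s) :
    ((a ^ n) ^ s - 1) - a ^ (n - 1) * ((a ^ n) ^ (s - 1) - 1) =
      a ^ (n * s) - a ^ (n * s - 1) + a ^ (n - 1) - 1 := by
  rw [mul_sub, pow_pred_mul_pow_pow_pred a hn hs, ← pow_mul]
  ring

/-- For `n, s ≥ 2`, if `α` is a root of `g(x) = x^{ns} − x^{ns−1} + x^{n−1} − 1`, then
`α^n` is a root of `f(x) = (x^s − 1)^n − x^{n−1}(x^{s−1} − 1)^n`. -/
theorem generalised_theta_root (n s : ℕ) (hn : 2 ≤ n) (hs : 2 ≤ s) (α : ℂ)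
    (hg : α ^ (n * s) - α ^ (n * s - 1) + α ^ (n - 1) - 1 = 0) :
    ((α ^ n) ^ s - 1) ^ n - (α ^ n) ^ (n - 1) * ((α ^ n) ^ (s - 1) - 1) ^ n = 0 := by
  have key : (α ^ n) ^ s - 1 = α ^ (n - 1) * ((α ^ n) ^ (s - 1) - 1) := by
    rw [← sub_eq_zero, pow_pow_sub_one_sub_mul_eq α (by omega) (by omega), hg]
  rw [key, mul_pow, ← pow_mul, Nat.mul_comm, pow_mul, sub_self]
end
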